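/- Let $A$ be an invertible lower triangular $n \times n$ matrix over a field. For $1 \le i \le j \le n$ define $z_{i,j} = \Delta_{[i,j],[1,j-i+1]}(A) / \Delta_{[i+1,j],[1,j-i]}(A)$ (the ratio of consecutive bottom-left justified minors), assuming all these minors are nonzero. Then the matrix $A$ is uniquely determined by the collection $(z_{i,j})_{1 \le i \le j \le n}$: explicitly, $A$ equals the product $W^n(z_{n,n}) \cdots W^1(z_{1,1}, z_{1,2}/z_{1,1}, \dots, z_{1,n}/z_{1,n-1})$, where $W^i(w_i,\dots,w_n) = \sum_{k=1}^{i-1} E_{kk} + \sum_{k=i}^{n} w_k E_{kk} + \sum_{k=i}^{n-1} E_{k+1,k}$. -/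

import Mathlib

/-- The minor `Δ_{I,J}(A)` with row set `I` and column set `J` (increasing order);
`0` if `|I| ≠ |J|`, `1` if both empty. -/
noncomputable def minorF {K : Type*} [CommRing K] {n : ℕ}
    (A : Matrix (Fin n) (Fin n) K) (I J : Finset (Fin n)) : K :=
  if h : I.card = J.card then
    Matrix.det (Matrix.of fun a b : Fin I.card =>
      A ((I.orderIsoOfFin rfl a : Fin n)) ((J.orderIsoOfFin h.symm b : Fin n)))
  else 0

/-- The interval `[a, b]` (1-indexed) inside `Fin n`. -/
def II (n a b : ℕ) : Finset (Fin n) :=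
  Finset.univ.filter fun t => a ≤ (t : ℕ) + 1 ∧ (t : ℕ) + 1 ≤ b

/-- The factor `W^i(w_i, …, w_n) = ∑_{k<i} E_{kk} + ∑_{k≥i} w_k E_{kk} + ∑_{k≥i} E_{k+1,k}`
(1-indexed `i`; here rows/columns of `Fin n` are 0-indexed, paper index `= val + 1`). -/
def Wfactor (n : ℕ) {K : Type*} [Field K] (i : ℕ) (w : Fin n → K) :
    Matrix (Fin n) (Fin n) K :=
  Matrix.of fun k l =>
    if k = l then (if (k : ℕ) + 1 < i then 1 else w k)
    else if (k : ℕ) = (l : ℕ) + 1 ∧ i ≤ (l : ℕ) + 1 then 1 else 0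


/-!
Induct on `n`, splitting off the last factor `W¹`: it is lower bidiagonal with diagonal entries
`z_{1,k}/z_{1,k-1}` (where `z_{1,0} = 1`), so the first column of `(W¹)⁻¹` is
`y_k = (-1)^(k-1) / z_{1,k}`. This is also the first column of `A⁻¹`: after clearing
denominators, the `k`-th entry of `A y` for `k > 1` is the Laplace expansion of a minor of `A`
with two equal rows. Hence `C = A (W¹)⁻¹` is lower triangular with first column `e₁`, that is
`C = diag(1, B)`. On the rows of `C` below the first, right multiplication by `W¹` is a
unitriangular column operation, so the bottom-left justified minors of `B` are those of `A` with
the first row deleted. The ratios of `B` are therefore the `z_{i+1,j+1}`, and the induction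
hypothesis `B = Wⁿ⁻¹ ⋯ W¹` becomes `diag(1, B) = Wⁿ ⋯ W²`.
-/

namespace WhirlFactorization

open Matrix Finset

section ExtendZero

variable {α : Type*} [Zero α] {n : ℕ}

def extendZero (A : Matrix (Fin n) (Fin n) α) (k l : ℕ) : α :=
  if h : k < n ∧ l < n then A ⟨k, h.1⟩ ⟨l, h.2⟩ else 0

lemma extendZero_apply (A : Matrix (Fin n) (Fin n) α) (k l : Fin n) :
    extendZero A k l = A k l := by
  simp [extendZero]

lemma extendZero_submatrix_succ (A : Matrix (Fin (n + 1)) (Fin (n + 1)) α) (k l : ℕ) :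
    extendZero (A.submatrix Fin.succ Fin.succ) k l = extendZero A (k + 1) (l + 1) := by
  simp [extendZero]

lemma extendZero_eq_zero_of_lt {A : Matrix (Fin n) (Fin n) α} (hA : A.IsLowerTriangular)
    {k l : ℕ} (hkl : k < l) : extendZero A k l = 0 := by
  unfold extendZero
  split_ifs with h
  exacts [hA (show (⟨k, h.1⟩ : Fin n) < ⟨l, h.2⟩ from hkl), rfl]

end ExtendZero

section CommRing

variable {R : Type*} [CommRing R]

/-- The minor `Δ_{[r+1, r+m], [1, m]}` of the array `a`, in the paper's `1`-indexed notation. -/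
def cornerMinor (a : ℕ → ℕ → R) (r m : ℕ) : R :=
  (of fun p q : Fin m => a (r + p) q).det

lemma minorF_image_eq_det_submatrix {n k : ℕ} (M : Matrix (Fin n) (Fin n) R)
    {f g : Fin k → Fin n} (hf : StrictMono f) (hg : StrictMono g) :
    minorF M (univ.image f) (univ.image g) = (M.submatrix f g).det := by
  have hcf : #(univ.image f) = k := by rw [card_image_of_injective _ hf.injective, card_fin]
  have hcg : #(univ.image g) = k := by rw [card_image_of_injective _ hg.injective, card_fin]
  have hc : #(univ.image f) = #(univ.image g) := hcf.trans hcg.symm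
  have hf' : (fun a => f (Fin.cast hcf a)) = (univ.image f).orderEmbOfFin rfl :=
    orderEmbOfFin_unique _ (fun _ => mem_image_of_mem f (mem_univ _))
      (hf.comp (Fin.cast_strictMono hcf))
  have hg' : (fun a => g (Fin.cast hcf a)) = (univ.image g).orderEmbOfFin hc.symm :=
    orderEmbOfFin_unique _ (fun _ => mem_image_of_mem g (mem_univ _))
      (hg.comp (Fin.cast_strictMono hcf))
  rw [minorF, dif_pos hc, ← det_submatrix_equiv_self (finCongr hcf)]
  congr 1
  ext a b
  simp only [of_apply, coe_orderIsoOfFin_apply, ← hf', ← hg', submatrix_apply, finCongr_apply]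

lemma II_eq_image {n i j m : ℕ} (hi : 1 ≤ i) (hj : j ≤ n) (hm : i + m = j + 1) :
    II n i j = univ.image fun p : Fin m => (⟨i - 1 + p, by omega⟩ : Fin n) := by
  ext t
  simp only [II, mem_filter, mem_univ, true_and, mem_image, Fin.ext_iff]
  constructor
  · exact fun ht => ⟨⟨t + 1 - i, by omega⟩, by simp only; omega⟩
  · rintro ⟨p, hp⟩
    omega

lemma minorF_II_eq_cornerMinor {n r m j : ℕ} (A : Matrix (Fin n) (Fin n) R) (hj : j ≤ n)
    (hrm : r + m = j) :
    minorF A (II n (r + 1) j) (II n 1 m) = cornerMinor (extendZero A) r m := by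
  rw [II_eq_image (m := m) le_add_self hj (by omega),
    II_eq_image (m := m) le_rfl (by omega) (by omega),
    minorF_image_eq_det_submatrix _ (fun p q h => by simpa using h) (fun p q h => by simpa using h)]
  congr 1
  ext p q
  have := p.isLt
  have := q.isLt
  rw [of_apply, extendZero, dif_pos ⟨by omega, by omega⟩]
  simp

section Arrays

variable {a : ℕ → ℕ → R}

lemma cornerMinor_zero_eq_prod (ha : ∀ k l, k < l → a k l = 0) (m : ℕ) :
    cornerMinor a 0 m = ∏ r ∈ range m, a r r := by
  rw [cornerMinor, det_of_isLowerTriangular _ fun p q h => by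
    simpa using ha p q (show (p : ℕ) < q from h)]
  simpa using Fin.prod_univ_eq_prod_range (fun r => a r r) m

lemma cornerMinor_succ_eq_of_columnOp {b : ℕ → ℕ → R} (c : ℕ → R)
    (h0 : ∀ k, a (k + 1) 0 = b k 0)
    (hsucc : ∀ k l, a (k + 1) (l + 1) = b k (l + 1) + c l * b k l) (r m : ℕ) :
    cornerMinor a (r + 1) m = cornerMinor b r m := by
  set U : Matrix (Fin m) (Fin m) R :=
    of fun s q => if s = q then 1 else if (s : ℕ) + 1 = q then c s else 0
  have hU : U.det = 1 := by
    rw [det_of_isUpperTriangular fun s q (h : q < s) => by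
      simp [U, h.ne', show (s : ℕ) + 1 ≠ q by omega]]
    simp [U]
  have hfactor :
      (of fun p q : Fin m => a (r + 1 + p) q) = (of fun p q : Fin m => b (r + p) q) * U := by
    ext p q
    rw [mul_apply]
    obtain ⟨_ | l, hq⟩ := q
    · rw [Fintype.sum_eq_single ⟨0, hq⟩ fun s hs => by simp [U, hs]]
      simp [U, add_right_comm, h0]
    · rw [Fintype.sum_eq_add ⟨l + 1, hq⟩ ⟨l, by omega⟩ (by simp [Fin.ext_iff]) fun s hs => by
        have h1 : (s : ℕ) ≠ l + 1 := fun h => hs.1 (Fin.ext h)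
        have h2 : (s : ℕ) ≠ l := fun h => hs.2 (Fin.ext h)
        simp [U, Fin.ext_iff, h1, h2]]
      simp [U, add_right_comm, hsucc, mul_comm]
  rw [cornerMinor, hfactor, det_mul, hU, mul_one, cornerMinor]

def rowReplacedMinor (a : ℕ → ℕ → R) (k j : ℕ) : R :=
  (of fun p q : Fin (j + 1) => a (if (p : ℕ) = j then k else p + 1) q).det

lemma rowReplacedMinor_zero (k : ℕ) : rowReplacedMinor a k 0 = a k 0 := by
  simp [rowReplacedMinor]

lemma rowReplacedMinor_succ (ha : ∀ k l, k < l → a k l = 0) (k j : ℕ) :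
    rowReplacedMinor a k (j + 1) =
      a k (j + 1) * cornerMinor a 1 (j + 1) - a (j + 1) (j + 1) * rowReplacedMinor a k j := by
  set M : Matrix (Fin (j + 2)) (Fin (j + 2)) R :=
    of fun p q => a (if (p : ℕ) = j + 1 then k else p + 1) q
  have hdropLast : M.submatrix (Fin.last (j + 1)).succAbove (Fin.last (j + 1)).succAbove =
      of fun p q : Fin (j + 1) => a (1 + p) q := by
    ext p q
    simp [M, p.isLt.ne, add_comm]
  have hdropPrev : M.submatrix (Fin.last j).castSucc.succAbove (Fin.last (j + 1)).succAbove =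
      of fun p q : Fin (j + 1) => a (if (p : ℕ) = j then k else p + 1) q := by
    ext p q
    rcases (Fin.le_last p).lt_or_eq with hp | rfl
    · have hpj : (p : ℕ) < j := hp
      simp [M, Fin.succAbove_castSucc_of_lt _ _ hp, hpj.ne, (hpj.trans j.lt_succ_self).ne]
    · simp [M]
  -- the last column of `M` is zero except in its last two rows
  rw [rowReplacedMinor, det_succ_column M (Fin.last (j + 1)),
    Fintype.sum_eq_add (Fin.last (j + 1)) (Fin.last j).castSucc (by simp [Fin.ext_iff])
      fun p hp => by
        simp [Fin.ext_iff] at hp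
        simp [M, hp.1, ha (p + 1) (j + 1) (by omega)],
    hdropLast, hdropPrev]
  have hlast : (-1 : R) ^ ((j + 1) + (j + 1)) = 1 := Even.neg_one_pow ⟨j + 1, rfl⟩
  have hprev : (-1 : R) ^ (j + (j + 1)) = -1 := Odd.neg_one_pow ⟨j, by ring⟩
  simp [M, hlast, hprev, cornerMinor, rowReplacedMinor]
  ring

lemma rowReplacedMinor_self {k : ℕ} (hk : 1 ≤ k) : rowReplacedMinor a k k = 0 := by
  refine det_zero_of_row_eq (i := ⟨k - 1, by omega⟩) (j := Fin.last k)
    (by simp [Fin.ext_iff]; omega) ?_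
  ext q
  simp [show k - 1 ≠ k by omega, show k - 1 + 1 = k by omega]

lemma sum_eq_rowReplacedMinor (ha : ∀ k l, k < l → a k l = 0) (k j : ℕ) :
    ∑ m ∈ range (j + 1), (-1) ^ m * a k m * cornerMinor a 1 m * ∏ r ∈ Ico (m + 1) (j + 1), a r r =
      (-1) ^ j * rowReplacedMinor a k j := by
  induction j with
  | zero => simp [rowReplacedMinor_zero, cornerMinor]
  | succ j ih =>
    have hsplit : ∀ m ∈ range (j + 1),
        (-1) ^ m * a k m * cornerMinor a 1 m * ∏ r ∈ Ico (m + 1) (j + 2), a r r =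
          ((-1) ^ m * a k m * cornerMinor a 1 m * ∏ r ∈ Ico (m + 1) (j + 1), a r r) *
            a (j + 1) (j + 1) := fun m hm => by
      rw [prod_Ico_succ_top (by simpa using hm)]
      ring
    rw [sum_range_succ, Ico_self, prod_empty, sum_congr rfl hsplit, ← sum_mul, ih,
      rowReplacedMinor_succ ha]
    ring

lemma sum_alternating_cornerMinor_eq_zero (ha : ∀ k l, k < l → a k l = 0) {k : ℕ}
    (hk : 1 ≤ k) :
    ∑ m ∈ range (k + 1), (-1) ^ m * a k m * cornerMinor a 1 m * ∏ r ∈ Ico (m + 1) (k + 1), a r r =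
      0 := by
  rw [sum_eq_rowReplacedMinor ha, rowReplacedMinor_self hk, mul_zero]

end Arrays

variable {n : ℕ}

/-- `B ↦ diag(1, B)`. -/
def blockOne : Matrix (Fin n) (Fin n) R →* Matrix (Fin (n + 1)) (Fin (n + 1)) R where
  toFun B := of (Fin.cons (Fin.cons 1 0) fun k => Fin.cons 0 (B k))
  map_one' := by
    ext k l
    refine Fin.cases ?_ (fun k => ?_) k <;> refine Fin.cases ?_ (fun l => ?_) l <;>
      simp [one_apply, Fin.succ_ne_zero, (Fin.succ_ne_zero _).symm]
  map_mul' B B' := by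
    ext k l
    refine Fin.cases ?_ (fun k => ?_) k <;> refine Fin.cases ?_ (fun l => ?_) l <;>
      simp [mul_apply, Fin.sum_univ_succ]

lemma eq_blockOne_submatrix_succ {M : Matrix (Fin (n + 1)) (Fin (n + 1)) R}
    (hcol : ∀ k, M k 0 = (Pi.single 0 1 : Fin (n + 1) → R) k)
    (hrow : ∀ l : Fin n, M 0 l.succ = 0) :
    M = blockOne (M.submatrix Fin.succ Fin.succ) := by
  ext k l
  refine Fin.cases ?_ (fun k => ?_) k <;> refine Fin.cases ?_ (fun l => ?_) l
  · simpa [blockOne] using hcol 0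
  · simpa [blockOne] using hrow l
  · simpa [blockOne, Fin.succ_ne_zero] using hcol k.succ
  · simp [blockOne]

end CommRing

section Field

variable {K : Type*} [Field K] {n : ℕ}

/-- `z_{1,m} = Δ_{[1,m],[1,m]} / Δ_{[2,m],[1,m-1]}`; at `m = 0` the truncated `m - 1` makes it
`1 / 1`. -/
def leadingRatio (a : ℕ → ℕ → K) (m : ℕ) : K :=
  cornerMinor a 0 m / cornerMinor a 1 (m - 1)

lemma leadingRatio_zero (a : ℕ → ℕ → K) : leadingRatio a 0 = 1 := by
  simp [leadingRatio, cornerMinor]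

lemma sum_mul_div_leadingRatio {a : ℕ → ℕ → K} (ha : ∀ k l, k < l → a k l = 0) {k : ℕ}
    (hdiag : ∀ r ≤ k, a r r ≠ 0) :
    ∑ m ∈ range (k + 1), a k m * ((-1) ^ m / leadingRatio a (m + 1)) =
      if k = 0 then 1 else 0 := by
  have hP : ∀ m ∈ range (k + 1), ∏ r ∈ Ico (m + 1) (k + 1), a r r ≠ 0 := fun m _ =>
    prod_ne_zero_iff.mpr fun r hr => hdiag r (by simp at hr; omega)
  have hterm : ∀ m ∈ range (k + 1), a k m * ((-1) ^ m / leadingRatio a (m + 1)) =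
      (-1) ^ m * a k m * cornerMinor a 1 m * (∏ r ∈ Ico (m + 1) (k + 1), a r r) /
        cornerMinor a 0 (k + 1) := fun m hm => by
    rw [cornerMinor_zero_eq_prod ha,
      ← prod_range_mul_prod_Ico (fun r => a r r) (show m + 1 ≤ k + 1 by simpa using hm),
      ← cornerMinor_zero_eq_prod ha, leadingRatio, Nat.add_sub_cancel]
    field_simp [hP m hm]
  rw [sum_congr rfl hterm, ← sum_div]
  split_ifs with hk
  · subst hk
    simp [cornerMinor, hdiag 0 le_rfl]
  · rw [sum_alternating_cornerMinor_eq_zero ha (by omega), zero_div]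

lemma mulVec_eq_single_zero {A : Matrix (Fin (n + 1)) (Fin (n + 1)) K}
    (hA : A.IsLowerTriangular) (hdiag : ∀ r, A r r ≠ 0) :
    A *ᵥ (fun s => (-1) ^ (s : ℕ) / leadingRatio (extendZero A) (s + 1)) = Pi.single 0 1 := by
  ext k
  have ha : ∀ k l, k < l → extendZero A k l = 0 := fun _ _ => extendZero_eq_zero_of_lt hA
  have hsum := Fin.sum_univ_eq_sum_range
    (fun m => extendZero A k m * ((-1) ^ m / leadingRatio (extendZero A) (m + 1))) (n + 1)
  simp only [extendZero_apply] at hsum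
  rw [mulVec, dotProduct, hsum,
    ← sum_subset (range_subset_range.mpr (by omega : (k : ℕ) + 1 ≤ n + 1))
      fun m _ hm => by rw [ha k m (by simpa using hm), zero_mul],
    sum_mul_div_leadingRatio ha fun r hr => ?_]
  · simp only [Fin.val_eq_zero_iff, Pi.single_apply]
  · exact (extendZero_apply A ⟨r, by omega⟩ ⟨r, by omega⟩).trans_ne (hdiag _)

lemma Wfactor_one_apply (w : Fin n → K) (k l : Fin n) :
    Wfactor n 1 w k l = if k = l then w k else if (k : ℕ) = l + 1 then 1 else 0 := by
  simp [Wfactor]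

lemma Wfactor_one_isLowerTriangular (w : Fin n → K) : (Wfactor n 1 w).IsLowerTriangular :=
  fun k l (h : k < l) => by
    simp [Wfactor_one_apply, h.ne, show (k : ℕ) ≠ l + 1 by have : (k : ℕ) < l := h; omega]

lemma isUnit_det_Wfactor_one {ζ : ℕ → K} (hζ0 : ζ 0 = 1) (hζ : ∀ m ≤ n, ζ (m + 1) ≠ 0) :
    IsUnit (Wfactor (n + 1) 1 fun s => ζ (s + 1) / ζ s).det := by
  rw [det_of_isLowerTriangular _ (Wfactor_one_isLowerTriangular _), isUnit_iff_ne_zero,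
    prod_ne_zero_iff]
  rintro ⟨_ | s, hs⟩ _
  · simpa [Wfactor_one_apply, hζ0] using hζ 0 (Nat.zero_le n)
  · simpa [Wfactor_one_apply] using ⟨hζ (s + 1) (by omega), hζ s (by omega)⟩

lemma Wfactor_one_mulVec {ζ : ℕ → K} (hζ0 : ζ 0 = 1) (hζ : ∀ m ≤ n, ζ (m + 1) ≠ 0) :
    Wfactor (n + 1) 1 (fun s => ζ (s + 1) / ζ s) *ᵥ (fun s => (-1) ^ (s : ℕ) / ζ (s + 1)) =
      Pi.single 0 1 := by
  ext ⟨_ | k, hk⟩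
  · rw [mulVec, dotProduct, Fintype.sum_eq_single 0 fun s hs => by
      simp [Wfactor_one_apply, Ne.symm hs]]
    simp [Wfactor_one_apply, hζ0, hζ 0 (Nat.zero_le n)]
  · rw [mulVec, dotProduct, Fintype.sum_eq_add ⟨k + 1, hk⟩ ⟨k, by omega⟩ (by simp [Fin.ext_iff])
      fun s hs => by
        have hsk : k ≠ s := fun h => hs.2 (Fin.ext h.symm)
        rw [Wfactor_one_apply, if_neg (Ne.symm hs.1), if_neg fun h => hsk (by simpa using h),
          zero_mul]]
    have := hζ (k + 1) (by omega)
    simp [Wfactor_one_apply, pow_succ]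
    field_simp
    ring

lemma extendZero_mul_Wfactor_one (M : Matrix (Fin (n + 1)) (Fin (n + 1)) K) (w : ℕ → K)
    (k l : ℕ) :
    extendZero (M * Wfactor (n + 1) 1 fun s => w s) k l =
      extendZero M k l * w l + extendZero M k (l + 1) := by
  by_cases h : k < n + 1 ∧ l < n + 1
  · rw [extendZero, dif_pos h, mul_apply, extendZero, dif_pos h]
    rcases lt_or_eq_of_le (Nat.succ_le_of_lt h.2) with hl | hl
    · rw [Fintype.sum_eq_add ⟨l, h.2⟩ ⟨l + 1, hl⟩ (by simp [Fin.ext_iff]) fun s hs => by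
        have h1 : (s : ℕ) ≠ l + 1 := fun h => hs.2 (Fin.ext h)
        simp [Wfactor_one_apply, hs.1, h1], extendZero, dif_pos ⟨h.1, hl⟩]
      simp [Wfactor_one_apply]
    · rw [Fintype.sum_eq_single ⟨l, h.2⟩ fun s hs => by
        have h1 : (s : ℕ) ≠ l + 1 := by omega
        simp [Wfactor_one_apply, hs, h1], extendZero, dif_neg (by omega)]
      simp [Wfactor_one_apply]
  · have h' : ¬(k < n + 1 ∧ l + 1 < n + 1) := fun h' => h ⟨h'.1, by omega⟩
    rw [extendZero, extendZero, extendZero, dif_neg h, dif_neg h, dif_neg h', zero_mul, zero_add]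

lemma cornerMinor_mul_Wfactor_one {C : Matrix (Fin (n + 1)) (Fin (n + 1)) K} (w : ℕ → K)
    (hC : ∀ k : Fin n, C k.succ 0 = 0) (r m : ℕ) :
    cornerMinor (extendZero (C * Wfactor (n + 1) 1 fun s => w s)) (r + 1) m =
      cornerMinor (extendZero (C.submatrix Fin.succ Fin.succ)) r m := by
  have hC0 : ∀ k, extendZero C (k + 1) 0 = 0 := fun k => by
    by_cases hk : k < n
    · exact (extendZero_apply C (Fin.succ ⟨k, hk⟩) 0).trans (hC _)
    · simp [extendZero, hk]
  refine cornerMinor_succ_eq_of_columnOp (fun l => w (l + 1)) (fun k => ?_) (fun k l => ?_) r m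
  · rw [extendZero_mul_Wfactor_one, hC0, extendZero_submatrix_succ, zero_mul, zero_add]
  · rw [extendZero_mul_Wfactor_one, extendZero_submatrix_succ, extendZero_submatrix_succ]
    ring

lemma Wfactor_succ_eq_blockOne {i : ℕ} (hi : 1 ≤ i) (w : Fin (n + 1) → K) :
    Wfactor (n + 1) (i + 1) w = blockOne (Wfactor n i fun s => w s.succ) := by
  ext k l
  refine Fin.cases ?_ (fun k => ?_) k <;> refine Fin.cases ?_ (fun l => ?_) l <;>
    simp [Wfactor, blockOne, (Fin.succ_ne_zero _).symm, show 0 < i by omega, show i ≠ 0 by omega]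

/-- `W^i(z_{i,i}, z_{i,i+1}/z_{i,i}, …, z_{i,n}/z_{i,n-1})`. -/
def whirlFactor (n : ℕ) (z : ℕ → ℕ → K) (i : ℕ) : Matrix (Fin n) (Fin n) K :=
  Wfactor n i fun s => if (s : ℕ) + 1 = i then z i i else z i (s + 1) / z i s

/-- `Wⁿ ⋯ W¹`. -/
def whirlProduct (n : ℕ) (z : ℕ → ℕ → K) : Matrix (Fin n) (Fin n) K :=
  (List.ofFn fun t : Fin n => whirlFactor n z (n - t)).prod

lemma whirlFactor_succ (z : ℕ → ℕ → K) {i : ℕ} (hi : 1 ≤ i) :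
    whirlFactor (n + 1) z (i + 1) = blockOne (whirlFactor n (fun i j => z (i + 1) (j + 1)) i) := by
  rw [whirlFactor, Wfactor_succ_eq_blockOne hi, whirlFactor]
  simp

lemma whirlProduct_succ (z : ℕ → ℕ → K) :
    whirlProduct (n + 1) z =
      blockOne (whirlProduct n fun i j => z (i + 1) (j + 1)) * whirlFactor (n + 1) z 1 := by
  rw [whirlProduct, List.ofFn_succ', List.prod_concat, whirlProduct, map_list_prod, List.map_ofFn]
  congr 1
  · refine congrArg (fun f => (List.ofFn f).prod) (funext fun t => ?_)
    rw [Function.comp_apply, ← whirlFactor_succ z (by omega)]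
    congr 1
    simp only [Fin.val_castSucc]
    omega
  · simp

lemma exists_eq_blockOne_mul_Wfactor {A : Matrix (Fin (n + 1)) (Fin (n + 1)) K}
    (hA : A.IsLowerTriangular) (hD : ∀ m ≤ n + 1, cornerMinor (extendZero A) 0 m ≠ 0)
    (hE : ∀ m ≤ n, cornerMinor (extendZero A) 1 m ≠ 0) :
    ∃ B : Matrix (Fin n) (Fin n) K, B.IsLowerTriangular ∧
      (∀ r m, cornerMinor (extendZero B) r m = cornerMinor (extendZero A) (r + 1) m) ∧
      A = blockOne B * Wfactor (n + 1) 1 fun s =>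
        leadingRatio (extendZero A) (s + 1) / leadingRatio (extendZero A) s := by
  set ζ := leadingRatio (extendZero A)
  set W : Matrix (Fin (n + 1)) (Fin (n + 1)) K := Wfactor (n + 1) 1 fun s => ζ (s + 1) / ζ s
  have hdiag : ∀ r, A r r ≠ 0 := fun r hr => hD (r + 1) r.isLt <| by
    rw [cornerMinor_zero_eq_prod fun _ _ => extendZero_eq_zero_of_lt hA, prod_range_succ,
      extendZero_apply, hr, mul_zero]
  have hζ0 : ζ 0 = 1 := leadingRatio_zero _
  have hζ : ∀ m ≤ n, ζ (m + 1) ≠ 0 := fun m hm => div_ne_zero (hD _ (by omega)) (hE _ hm)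
  have hW : IsUnit W.det := isUnit_det_Wfactor_one hζ0 hζ
  set C := A * W⁻¹
  have hCW : C * W = A := nonsing_inv_mul_cancel_right _ _ hW
  have hClt : C.IsLowerTriangular := by
    have := invertibleOfIsUnitDet W hW
    exact hA.mul (blockTriangular_inv_of_blockTriangular (Wfactor_one_isLowerTriangular _))
  have hcol : ∀ k, C k 0 = (Pi.single 0 1 : Fin (n + 1) → K) k := by
    set y : Fin (n + 1) → K := fun s => (-1) ^ (s : ℕ) / ζ (s + 1)
    have : C *ᵥ Pi.single 0 1 = Pi.single 0 1 := calc
      C *ᵥ Pi.single 0 1 = C *ᵥ (W *ᵥ y) := by rw [Wfactor_one_mulVec hζ0 hζ]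
      _ = A *ᵥ y := by rw [mulVec_mulVec, hCW]
      _ = Pi.single 0 1 := mulVec_eq_single_zero hA hdiag
    simpa [mulVec_single_one] using congrFun this
  refine ⟨C.submatrix Fin.succ Fin.succ, fun k l h => hClt (Fin.succ_lt_succ_iff.mpr h),
    fun r m => ?_, ?_⟩
  · rw [← hCW, cornerMinor_mul_Wfactor_one (fun l => ζ (l + 1) / ζ l)
      fun k => (hcol k.succ).trans (Pi.single_eq_of_ne (Fin.succ_ne_zero k) _)]
  · rw [← eq_blockOne_submatrix_succ hcol fun l => hClt (Fin.succ_pos l), hCW]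

theorem eq_whirlProduct {A : Matrix (Fin n) (Fin n) K} (hA : A.IsLowerTriangular)
    (hmin : ∀ r m, r + m ≤ n → cornerMinor (extendZero A) r m ≠ 0) {z : ℕ → ℕ → K}
    (hz : ∀ r m, 1 ≤ m → r + m ≤ n → z (r + 1) (r + m) =
      cornerMinor (extendZero A) r m / cornerMinor (extendZero A) (r + 1) (m - 1)) :
    A = whirlProduct n z := by
  induction n generalizing z with
  | zero => exact Subsingleton.elim _ _
  | succ n ih =>
    obtain ⟨B, hB, hBA, hAB⟩ := exists_eq_blockOne_mul_Wfactor hA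
      (fun m _ => hmin 0 m (by omega)) (fun m _ => hmin 1 m (by omega))
    have hz1 : ∀ m, 1 ≤ m → m ≤ n + 1 → z 1 m = leadingRatio (extendZero A) m :=
      fun m h1 h2 => by simpa [leadingRatio] using hz 0 m h1 (by omega)
    have hW : whirlFactor (n + 1) z 1 = Wfactor (n + 1) 1 fun s =>
        leadingRatio (extendZero A) (s + 1) / leadingRatio (extendZero A) s := by
      refine congrArg _ (funext fun s => ?_)
      split_ifs with hs
      · rw [hz1 1 le_rfl (by omega), show (s : ℕ) = 0 by omega, leadingRatio_zero, div_one]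
      · rw [hz1 _ (by omega) (by omega), hz1 _ (by omega) (by omega)]
    have hB : B = whirlProduct n fun i j => z (i + 1) (j + 1) :=
      ih hB (fun r m h => hBA r m ▸ hmin (r + 1) m (by omega)) fun r m h1 h2 => by
        rw [hBA, hBA, add_right_comm r m]
        exact hz (r + 1) m h1 (by omega)
    rw [whirlProduct_succ, hW, ← hB, ← hAB]

end Field

end WhirlFactorization

theorem lowerTriangular_eq_whirl_factorization_general (n : ℕ) (K : Type*) [Field K]
    (A : Matrix (Fin n) (Fin n) K)
    (hlt : ∀ i j : Fin n, i < j → A i j = 0)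
    (hmin : ∀ i j : ℕ, 1 ≤ i → i ≤ j → j ≤ n →
      minorF A (II n i j) (II n 1 (j - i + 1)) ≠ 0)
    (z : ℕ → ℕ → K)
    (hz : ∀ i j : ℕ, 1 ≤ i → i ≤ j → j ≤ n →
      z i j = minorF A (II n i j) (II n 1 (j - i + 1)) /
        minorF A (II n (i + 1) j) (II n 1 (j - i))) :
    A = (List.ofFn fun t : Fin n =>
      Wfactor n (n - (t : ℕ)) fun s : Fin n =>
        if (s : ℕ) + 1 = n - (t : ℕ) then z (n - (t : ℕ)) (n - (t : ℕ))
        else z (n - (t : ℕ)) ((s : ℕ) + 1) / z (n - (t : ℕ)) (s : ℕ)).prod := by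
  refine WhirlFactorization.eq_whirlProduct hlt (fun r m hrm => ?_) (fun r m hm hrm => ?_)
  · rcases Nat.eq_zero_or_pos m with rfl | hm
    · simp [WhirlFactorization.cornerMinor]
    · rw [← WhirlFactorization.minorF_II_eq_cornerMinor A hrm rfl]
      simpa [show r + m - (r + 1) + 1 = m by omega] using
        hmin (r + 1) (r + m) (by omega) (by omega) hrm
  · rw [hz (r + 1) (r + m) (by omega) (by omega) hrm, show r + m - (r + 1) + 1 = m by omega,
      show r + m - (r + 1) = m - 1 by omega,
      WhirlFactorization.minorF_II_eq_cornerMinor A hrm rfl,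
      WhirlFactorization.minorF_II_eq_cornerMinor A hrm (by omega)]

/-- An invertible lower triangular matrix `A` with nonzero bottom-left justified minors
is recovered from its flag-minor ratios `z_{i,j} = Δ_{[i,j],[1,j-i+1]}/Δ_{[i+1,j],[1,j-i]}`
as the product `A = Wⁿ(z_{n,n}) ⋯ W¹(z_{1,1}, z_{1,2}/z_{1,1}, …, z_{1,n}/z_{1,n-1})`. -/
theorem lowerTriangular_eq_whirl_factorization (n : ℕ) (K : Type*) [Field K]
    (A : Matrix (Fin n) (Fin n) K)
    (hdet : A.det ≠ 0)
    (hlt : ∀ i j : Fin n, i < j → A i j = 0)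
    (hmin : ∀ i j : ℕ, 1 ≤ i → i ≤ j → j ≤ n →
      minorF A (II n i j) (II n 1 (j - i + 1)) ≠ 0)
    (z : ℕ → ℕ → K)
    (hz : ∀ i j : ℕ, 1 ≤ i → i ≤ j → j ≤ n →
      z i j = minorF A (II n i j) (II n 1 (j - i + 1)) /
        minorF A (II n (i + 1) j) (II n 1 (j - i))) :
    A = (List.ofFn fun t : Fin n =>
      Wfactor n (n - (t : ℕ)) fun s : Fin n =>
        if (s : ℕ) + 1 = n - (t : ℕ) then z (n - (t : ℕ)) (n - (t : ℕ))
        else z (n - (t : ℕ)) ((s : ℕ) + 1) / z (n - (t : ℕ)) (s : ℕ)).prod :=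
  lowerTriangular_eq_whirl_factorization_general n K A hlt hmin z hz
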